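/- Let P : C^op → InfSL be a variational doctrine. If for some small category J the category Q_P has all J-indexed limits, then C has all weak J-indexed limits (limit cones exist without uniqueness of mediating arrows). Dually, if Q_P has a J-indexed colimit of a diagram ∇_P ∘ F whose colimit object is of the form (W, δ_W), then W is a (strong) colimit of F in C. -/

import Mathlib

open CategoryTheory CategoryTheory.Limits Opposite

noncomputable section

universe w v u

namespace DoctrinePaper

variable {C : Type u} [Category.{v} C] [HasFiniteProducts C]

/-- The fiber of a primary doctrine `P : Cᵒᵖ ⥤ SemilatInfCat` over an object `A`. -/
abbrev Fib (P : Cᵒᵖ ⥤ SemilatInfCat.{w}) (A : C) : Type w :=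
  ↥(P.obj (op A))

/-- Reindexing along an arrow `f : A ⟶ B`. -/
def rmap (P : Cᵒᵖ ⥤ SemilatInfCat.{w}) {A B : C} (f : A ⟶ B) :
    Fib P B → Fib P A :=
  fun x => (P.map f.op) x

variable (P : Cᵒᵖ ⥤ SemilatInfCat.{w})

/-- An elementary doctrine: fibered equalities `δ A ∈ P (A ⨯ A)` such that
`E_e(α) = P⟨pr1,pr2⟩(α) ⊓ P⟨pr2,pr3⟩(δ A)` is left adjoint to reindexing along
`e = ⟨pr1,pr2,pr2⟩ : X ⨯ A ⟶ (X ⨯ A) ⨯ A`. -/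
structure IsElementary where
  δ : ∀ A : C, Fib P (A ⨯ A)
  adj :
    ∀ (X A : C) (α : Fib P (X ⨯ A)) (β : Fib P ((X ⨯ A) ⨯ A)),
      (rmap P (prod.fst : (X ⨯ A) ⨯ A ⟶ X ⨯ A) α ⊓
          rmap P (prod.lift (prod.fst ≫ prod.snd) prod.snd : (X ⨯ A) ⨯ A ⟶ A ⨯ A) (δ A) ≤ β)
        ↔ α ≤ rmap P (prod.lift (𝟙 (X ⨯ A)) prod.snd : X ⨯ A ⟶ (X ⨯ A) ⨯ A) β

/-- A `P`-equivalence relation over `A`. -/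
structure IsEqRel (hE : IsElementary P) {A : C} (ρ : Fib P (A ⨯ A)) : Prop where
  refl : hE.δ A ≤ ρ
  symm : ρ = rmap P (prod.lift prod.snd prod.fst : A ⨯ A ⟶ A ⨯ A) ρ
  trans :
    rmap P (prod.fst : (A ⨯ A) ⨯ A ⟶ A ⨯ A) ρ ⊓
        rmap P (prod.lift (prod.fst ≫ prod.snd) prod.snd : (A ⨯ A) ⨯ A ⟶ A ⨯ A) ρ ≤
      rmap P (prod.lift (prod.fst ≫ prod.fst) prod.snd : (A ⨯ A) ⨯ A ⟶ A ⨯ A) ρ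

/-- An elementary existential doctrine, together with the induced left adjoints
`∃_f` along all arrows, satisfying the adjunction law, Frobenius reciprocity, and
the Beck–Chevalley condition along pullbacks of projections. -/
structure IsExistential extends IsElementary P where
  E : ∀ {A B : C}, (A ⟶ B) → Fib P A → Fib P B
  adjE : ∀ {A B : C} (f : A ⟶ B) (α : Fib P A) (β : Fib P B),
    E f α ≤ β ↔ α ≤ rmap P f β
  frobenius : ∀ {A B : C} (f : A ⟶ B) (α : Fib P A) (β : Fib P B),
    E f (α ⊓ rmap P f β) = E f α ⊓ β
  beckChevalley : ∀ {B A A' : C} (f : A' ⟶ A) (β : Fib P (B ⨯ A)),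
    E (prod.snd : B ⨯ A' ⟶ A') (rmap P (prod.map (𝟙 B) f) β) =
      rmap P f (E (prod.snd : B ⨯ A ⟶ A) β)

/-- Descent data for a relation `ρ` over `A`. -/
def Des {A : C} (ρ : Fib P (A ⨯ A)) : Set (Fib P A) :=
  {α | rmap P (prod.fst : A ⨯ A ⟶ A) α ⊓ ρ ≤ rmap P (prod.snd : A ⨯ A ⟶ A) α}

/-- Comprehensive diagonals: `f = g` iff `⊤ = P⟨f,g⟩(δ)`. -/
def ComprehensiveDiagonals (hE : IsElementary P) : Prop :=
  ∀ {X A : C} (f g : X ⟶ A), f = g ↔ rmap P (prod.lift f g) (hE.δ A) = ⊤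

/-- (Weak) comprehension structure. -/
structure Comprehension where
  cObj : ∀ {A : C}, Fib P A → C
  cArr : ∀ {A : C} (α : Fib P A), cObj α ⟶ A
  cTop : ∀ {A : C} (α : Fib P A), rmap P (cArr α) α = ⊤
  cUniv : ∀ {A : C} (α : Fib P A) {Y : C} (f : Y ⟶ A),
    rmap P f α = ⊤ → ∃ k : Y ⟶ cObj α, k ≫ cArr α = f

/-- Full comprehension. -/
def Comprehension.Full (hC : Comprehension P) : Prop :=
  ∀ {A : C} (α β : Fib P A), α ≤ β ↔ rmap P (hC.cArr α) β = ⊤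

/-- Strong comprehension: comprehension arrows are monic. -/
def Comprehension.Strong (hC : Comprehension P) : Prop :=
  ∀ {A : C} (α : Fib P A), Mono (hC.cArr α)

/-- `P`-injective arrow. -/
def PInj (hE : IsElementary P) {X A : C} (f : X ⟶ A) : Prop :=
  rmap P (prod.map f f) (hE.δ A) = hE.δ X

/-- `P`-surjective arrow. -/
def PSurj (hEx : IsExistential P) {X A : C} (f : X ⟶ A) : Prop :=
  hEx.E f (⊤ : Fib P X) = ⊤

/-- The product relation `ρ ⊠ σ` on `(A ⨯ B) ⨯ (A ⨯ B)`. -/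
def boxprod {A B : C} (ρ : Fib P (A ⨯ A)) (σ : Fib P (B ⨯ B)) :
    Fib P ((A ⨯ B) ⨯ (A ⨯ B)) :=
  rmap P (prod.map prod.fst prod.fst) ρ ⊓ rmap P (prod.map prod.snd prod.snd) σ

/-- The hom condition of the elementary quotient completion: `f : A ⟶ B`
represents an arrow `(A,ρ) ⟶ (B,σ)` iff `ρ ≤ P(f×f)(σ)`. -/
def QHomC {A B : C} (ρ : Fib P (A ⨯ A)) (σ : Fib P (B ⨯ B)) (f : A ⟶ B) : Prop :=
  ρ ≤ rmap P (prod.map f f) σ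

/-- The equivalence on representatives: `f ∼ g` iff `⊤ = P⟨f,g⟩(σ)`. -/
def QEq {A B : C} (σ : Fib P (B ⨯ B)) (f g : A ⟶ B) : Prop :=
  rmap P (prod.lift f g) σ = ⊤

/-- An object of the elementary quotient completion `Q_P`. -/
structure QObj (hE : IsElementary P) where
  base : C
  rel : Fib P (base ⨯ base)
  isEq : IsEqRel P hE rel

/-- A `J`-indexed diagram in the elementary quotient completion `Q_P`,
given by representatives. -/
structure QDiagram (hE : IsElementary P) (J : Type*) [Category J] where
  obj : J → QObj P hE
  map : ∀ {i j : J}, (i ⟶ j) → ((obj i).base ⟶ (obj j).base)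
  map_hom : ∀ {i j : J} (u : i ⟶ j), QHomC P (obj i).rel (obj j).rel (map u)
  map_id : ∀ i : J, QEq P (obj i).rel (map (𝟙 i)) (𝟙 (obj i).base)
  map_comp : ∀ {i j k : J} (u : i ⟶ j) (v : j ⟶ k),
    QEq P (obj k).rel (map (u ≫ v)) (map u ≫ map v)

/-- The diagram has a (strong) limit in `Q_P`. -/
def QHasLimit {J : Type*} [Category J] (hE : IsElementary P)
    (D : QDiagram P hE J) : Prop :=
  ∃ (W : QObj P hE) (π : ∀ j : J, W.base ⟶ (D.obj j).base),
    (∀ j, QHomC P W.rel (D.obj j).rel (π j)) ∧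
    (∀ {i j : J} (u : i ⟶ j), QEq P (D.obj j).rel (π i ≫ D.map u) (π j)) ∧
    ∀ (T : QObj P hE) (c : ∀ j : J, T.base ⟶ (D.obj j).base),
      (∀ j, QHomC P T.rel (D.obj j).rel (c j)) →
      (∀ {i j : J} (u : i ⟶ j), QEq P (D.obj j).rel (c i ≫ D.map u) (c j)) →
      ∃ m : T.base ⟶ W.base, QHomC P T.rel W.rel m ∧
        (∀ j, QEq P (D.obj j).rel (m ≫ π j) (c j)) ∧
        ∀ m' : T.base ⟶ W.base, QHomC P T.rel W.rel m' →
          (∀ j, QEq P (D.obj j).rel (m' ≫ π j) (c j)) → QEq P W.rel m m'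

end DoctrinePaper

/-!
In an elementary doctrine `δ_A` is the least reflexive relation on `A`. Hence `(A, δ_A)` is an
object of `Q_P` and every arrow of `C` preserves the diagonals, so cones over `∇ F` with vertex
`∇ T` are the same as cones over `F`, once comprehensive diagonals identify `f ∼ g` modulo `δ`
with `f = g`. A limit `(L, ρ)` of `∇ F` thus gives a cone over `F` with base `L` through which
every cone factors, but only uniquely modulo `ρ`: a weak limit. A colimit with vertex `∇ W` has
its mediating arrows unique modulo `δ_W`, i.e. unique.
-/

namespace DoctrinePaper

variable {C : Type u} [Category.{v} C]

section Reindexing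

variable {P : Cᵒᵖ ⥤ SemilatInfCat.{w}}

lemma rmap_id {A : C} (x : Fib P A) : rmap P (𝟙 A) x = x := by
  simp only [rmap, op_id, P.map_id]; rfl

lemma rmap_comp {A B D : C} (f : A ⟶ B) (g : B ⟶ D) (x : Fib P D) :
    rmap P (f ≫ g) x = rmap P f (rmap P g x) := by
  simp only [rmap, op_comp, P.map_comp]; rfl

lemma rmap_top {A B : C} (f : A ⟶ B) : rmap P f ⊤ = ⊤ :=
  map_top (show InfTopHom (Fib P B) (Fib P A) from P.map f.op)

lemma rmap_mono {A B : C} (f : A ⟶ B) : Monotone (rmap P f) :=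
  OrderHomClass.mono (show InfTopHom (Fib P B) (Fib P A) from P.map f.op)

end Reindexing

variable [HasFiniteProducts C] (P : Cᵒᵖ ⥤ SemilatInfCat.{w})

section Diagonals

variable {P}

attribute [local simp] prod.lift_fst prod.lift_snd prod.lift_fst_assoc prod.lift_snd_assoc

namespace IsElementary

variable (hE : IsElementary P)

lemma rmap_lift_self_delta {X A : C} (f : X ⟶ A) :
    rmap P (prod.lift f f) (hE.δ A) = ⊤ := by
  have hsnd : rmap P (prod.lift prod.snd prod.snd : A ⨯ A ⟶ A ⨯ A) (hE.δ A) = ⊤ := by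
    have := (hE.adj A A ⊤ (rmap P (prod.lift (prod.fst ≫ prod.snd) prod.snd) (hE.δ A))).mp
      inf_le_right
    rwa [top_le_iff, ← rmap_comp, show prod.lift (𝟙 (A ⨯ A)) prod.snd ≫
      prod.lift (prod.fst ≫ prod.snd) prod.snd = prod.lift prod.snd prod.snd by ext <;> simp]
      at this
  rw [show prod.lift f f = prod.lift f f ≫ (prod.lift prod.snd prod.snd : A ⨯ A ⟶ A ⨯ A) by
    ext <;> simp, rmap_comp, hsnd, rmap_top]

lemma delta_le_of_reflexive {A : C} {ρ : Fib P (A ⨯ A)}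
    (hρ : rmap P (prod.lift (𝟙 A) (𝟙 A)) ρ = ⊤) : hE.δ A ≤ ρ := by
  -- the adjunction at `α = ⊤` compares `δ` and `ρ` on the last two factors of `(A ⨯ A) ⨯ A`
  have key := (hE.adj A A ⊤ (rmap P (prod.lift (prod.fst ≫ prod.snd) prod.snd) ρ)).mpr (by
    rw [← rmap_comp, show prod.lift (𝟙 (A ⨯ A)) prod.snd ≫
        prod.lift (prod.fst ≫ prod.snd) prod.snd = prod.snd ≫ prod.lift (𝟙 A) (𝟙 A) by
        ext <;> simp,
      rmap_comp, hρ, rmap_top])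
  rw [rmap_top, top_inf_eq] at key
  have := rmap_mono (prod.lift (prod.lift prod.fst prod.fst) prod.snd : A ⨯ A ⟶ (A ⨯ A) ⨯ A) key
  rwa [← rmap_comp, ← rmap_comp, show prod.lift (prod.lift prod.fst prod.fst) prod.snd ≫
    prod.lift (prod.fst ≫ prod.snd) prod.snd = 𝟙 (A ⨯ A) by ext <;> simp, rmap_id, rmap_id]
    at this

lemma delta_le_rmap_swap (A : C) :
    hE.δ A ≤ rmap P (prod.lift prod.snd prod.fst : A ⨯ A ⟶ A ⨯ A) (hE.δ A) := by
  refine hE.delta_le_of_reflexive ?_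
  rw [← rmap_comp, prod.comp_lift, prod.lift_snd, prod.lift_fst]
  exact hE.rmap_lift_self_delta _

lemma isEqRel_delta (A : C) : IsEqRel P hE (hE.δ A) where
  refl := le_rfl
  symm := by
    refine le_antisymm (hE.delta_le_rmap_swap A) ?_
    have := rmap_mono (prod.lift prod.snd prod.fst) (hE.delta_le_rmap_swap A)
    rwa [← rmap_comp, show prod.lift prod.snd prod.fst ≫ prod.lift prod.snd prod.fst =
      𝟙 (A ⨯ A) by ext <;> simp, rmap_id] at this
  trans := by
    refine (hE.adj A A _ _).mpr ?_
    rw [← rmap_comp, show prod.lift (𝟙 (A ⨯ A)) prod.snd ≫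
      prod.lift (prod.fst ≫ prod.fst) prod.snd = 𝟙 (A ⨯ A) by ext <;> simp, rmap_id]

lemma qHomC_delta {A B : C} (f : A ⟶ B) : QHomC P (hE.δ A) (hE.δ B) f := by
  refine hE.delta_le_of_reflexive ?_
  rw [← rmap_comp, prod.lift_map]
  exact hE.rmap_lift_self_delta _

lemma qEq_delta_self {X A : C} (f : X ⟶ A) : QEq P (hE.δ A) f f :=
  hE.rmap_lift_self_delta f

def nabla (A : C) : QObj P hE := ⟨A, hE.δ A, hE.isEqRel_delta A⟩

def nablaDiagram {J : Type*} [Category J] (F : J ⥤ C) : QDiagram P hE J where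
  obj j := hE.nabla (F.obj j)
  map u := F.map u
  map_hom u := hE.qHomC_delta (F.map u)
  map_id i := by rw [F.map_id]; exact hE.qEq_delta_self _
  map_comp u v := by rw [F.map_comp]; exact hE.qEq_delta_self _

end IsElementary

lemma ComprehensiveDiagonals.qEq_delta_iff {hE : IsElementary P}
    (hcd : ComprehensiveDiagonals P hE) {X A : C} {f g : X ⟶ A} :
    QEq P (hE.δ A) f g ↔ f = g :=
  (hcd f g).symm

end Diagonals

theorem limits_and_colimits_transfer
    (hE : IsElementary P)
    (hcd : ComprehensiveDiagonals P hE)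
    {J : Type*} [Category J] :
    ((∀ D : QDiagram P hE J, QHasLimit P hE D) →
      ∀ F : J ⥤ C, ∃ (L : C) (π : ∀ j : J, L ⟶ F.obj j),
        (∀ {i j : J} (u : i ⟶ j), π i ≫ F.map u = π j) ∧
        ∀ (T : C) (c : ∀ j : J, T ⟶ F.obj j),
          (∀ {i j : J} (u : i ⟶ j), c i ≫ F.map u = c j) →
          ∃ m : T ⟶ L, ∀ j, m ≫ π j = c j) ∧
    (∀ (F : J ⥤ C) (W : C) (ι : ∀ j : J, F.obj j ⟶ W),
      (∀ j, QHomC P (hE.δ (F.obj j)) (hE.δ W) (ι j)) →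
      (∀ {i j : J} (u : i ⟶ j), QEq P (hE.δ W) (F.map u ≫ ι j) (ι i)) →
      (∀ (T : QObj P hE) (c : ∀ j : J, F.obj j ⟶ T.base),
        (∀ j, QHomC P (hE.δ (F.obj j)) T.rel (c j)) →
        (∀ {i j : J} (u : i ⟶ j), QEq P T.rel (F.map u ≫ c j) (c i)) →
        ∃ m : W ⟶ T.base, QHomC P (hE.δ W) T.rel m ∧
          (∀ j, QEq P T.rel (ι j ≫ m) (c j)) ∧
          ∀ m' : W ⟶ T.base, QHomC P (hE.δ W) T.rel m' →
            (∀ j, QEq P T.rel (ι j ≫ m') (c j)) → QEq P T.rel m m') →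
      (∀ {i j : J} (u : i ⟶ j), F.map u ≫ ι j = ι i) ∧
        ∀ (T : C) (c : ∀ j : J, F.obj j ⟶ T),
          (∀ {i j : J} (u : i ⟶ j), F.map u ≫ c j = c i) →
          ∃! m : W ⟶ T, ∀ j, ι j ≫ m = c j) := by
  refine ⟨fun hlim F => ?_, fun F W ι _ hcone hcolim => ?_⟩
  · obtain ⟨L, π, -, hπ, huniv⟩ := hlim (hE.nablaDiagram F)
    refine ⟨L.base, π, fun u => hcd.qEq_delta_iff.mp (hπ u), fun T c hc => ?_⟩
    obtain ⟨m, -, hm, -⟩ := huniv (hE.nabla T) c (fun j => hE.qHomC_delta (c j))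
      (fun u => hcd.qEq_delta_iff.mpr (hc u))
    exact ⟨m, fun j => hcd.qEq_delta_iff.mp (hm j)⟩
  · refine ⟨fun u => hcd.qEq_delta_iff.mp (hcone u), fun T c hc => ?_⟩
    obtain ⟨m, -, hm, huniq⟩ := hcolim (hE.nabla T) c (fun j => hE.qHomC_delta (c j))
      (fun u => hcd.qEq_delta_iff.mpr (hc u))
    refine ⟨m, fun j => hcd.qEq_delta_iff.mp (hm j), fun m' hm' => ?_⟩
    exact (hcd.qEq_delta_iff.mp
      (huniq m' (hE.qHomC_delta m') fun j => hcd.qEq_delta_iff.mpr (hm' j))).symm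

end DoctrinePaper
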